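/- arXiv:2005.09209 — 2 statements merged into one kernel-verified Lean document; each statement's English description precedes it below -/
import Mathlib

section
/- For the dataset D = {x₁=(0,0,−), x₂=(0,1,−), x₃=(0,3,+), x₄=(2,3,−)} and fair privacy taken as equal feature-count: (a) there is no assignment of singleton feature sets S_i ∈ {{f₁},{f₂}} to the four data points such that Φ_{S_i}(x_i) is the same for all i; and (b) assigning S_i = {f₁,f₂} to all points yields equal accuracy 1 but violates need-to-know, since Φ_{f₂}(x₁)=Φ_{f₂}(x₂)=1 and Φ_{f₁}(x₄)=1. -/
open Finset

/-- A finite dataset of feature vectors (features `ι`, values `V`) with labels `L`. -/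
structure Dataset (ι V L : Type*) where
  n : ℕ
  npos : 0 < n
  pt : Fin n → ι → V
  lab : Fin n → L

variable {ι V L : Type*} [DecidableEq ι] [DecidableEq V] [DecidableEq L] [Fintype L] [Nonempty L]

/-- The data points of `D` that agree with `x` on all features in `S`
(the conditioning event `Ω_S(X) = Ω_S(x)`). -/
def Dataset.mset (D : Dataset ι V L) (S : Finset ι) (x : ι → V) : Finset (Fin D.n) :=
  Finset.univ.filter (fun j => ∀ f ∈ S, D.pt j f = x f)

/-- Empirical posterior probability `Pr[Y(X) = c | Ω_S(X) = Ω_S(x)]`. -/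
noncomputable def post (D : Dataset ι V L) (S : Finset ι) (x : ι → V) (c : L) : ℝ :=
  (((D.mset S x).filter (fun j => D.lab j = c)).card : ℝ) / ((D.mset S x).card : ℝ)

/-- Predictive power `Φ_S(x)`: the maximal posterior probability of a label. -/
noncomputable def power (D : Dataset ι V L) (S : Finset ι) (x : ι → V) : ℝ :=
  Finset.univ.sup' Finset.univ_nonempty (post D S x)

/-- A (randomized) classifier gives, for each revealed feature set and input,
a probability distribution over output labels. -/
def IsDist (Yh : Finset ι → (ι → V) → L → ℝ) : Prop :=
  (∀ S x c, 0 ≤ Yh S x c) ∧ ∀ S x, ∑ c, Yh S x c = 1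

/-- The classifier's output distribution depends only on the revealed features. -/
def DependsOnly (Yh : Finset ι → (ι → V) → L → ℝ) : Prop :=
  ∀ S x x', (∀ f ∈ S, x f = x' f) → Yh S x = Yh S x'

/-- Prediction accuracy `acc(Ŷ(Ω_S(x)))`, expressed as `Σ_c p_c · p̂_c`. -/
noncomputable def acc (D : Dataset ι V L) (Yh : Finset ι → (ι → V) → L → ℝ)
    (S : Finset ι) (x : ι → V) : ℝ :=
  ∑ c, post D S x c * Yh S x c

/-- An optimal classifier: maximal accuracy for every data point and feature subset. -/
def IsOptimal (D : Dataset ι V L) (Yh : Finset ι → (ι → V) → L → ℝ) : Prop :=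
  IsDist Yh ∧ ∀ Yh', IsDist Yh' → ∀ (i : Fin D.n) (S : Finset ι),
    acc D Yh' S (D.pt i) ≤ acc D Yh S (D.pt i)

/-- Fair privacy (feature match): the same feature set is used for all data points. -/
def FairPrivacyMatch (D : Dataset ι V L) (σ : Fin D.n → Finset ι) : Prop :=
  ∃ S, ∀ i, σ i = S

/-- Non-triviality: a non-empty feature set is used for each data point. -/
def NonTrivial (D : Dataset ι V L) (σ : Fin D.n → Finset ι) : Prop :=
  ∀ i, σ i ≠ ∅

/-- Fair prediction accuracy: all data points are predicted with equal accuracy `γ ∈ (0,1]`. -/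
def FairAccuracy (D : Dataset ι V L) (Yh : Finset ι → (ι → V) → L → ℝ)
    (σ : Fin D.n → Finset ι) : Prop :=
  ∃ γ : ℝ, 0 < γ ∧ γ ≤ 1 ∧ ∀ i, acc D Yh (σ i) (D.pt i) = γ

/-- Need-to-know: every proper subset of the used feature set gives strictly lower accuracy. -/
def NeedToKnow (D : Dataset ι V L) (Yh : Finset ι → (ι → V) → L → ℝ)
    (σ : Fin D.n → Finset ι) : Prop :=
  ∀ i, ∀ S' ⊂ σ i, acc D Yh S' (D.pt i) < acc D Yh (σ i) (D.pt i)

/-- The illustrative dataset of Table 1: four points, two features, labels in `Bool`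
(`true` = "+", `false` = "−"). -/
def Dex : Dataset (Fin 2) ℕ Bool where
  n := 4
  npos := by norm_num
  pt := ![![0, 0], ![0, 1], ![0, 3], ![2, 3]]
  lab := ![false, false, true, false]

def i0 : Fin Dex.n := ⟨0, by norm_num [Dex]⟩
def i1 : Fin Dex.n := ⟨1, by norm_num [Dex]⟩
def i2 : Fin Dex.n := ⟨2, by norm_num [Dex]⟩
def i3 : Fin Dex.n := ⟨3, by norm_num [Dex]⟩

lemma power_bool {ι' V' : Type*} [DecidableEq ι'] [DecidableEq V']
    (D : Dataset ι' V' Bool) (S : Finset ι') (x : ι' → V') :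
    power D S x = max (post D S x false) (post D S x true) := by
  apply le_antisymm
  · exact Finset.sup'_le _ _ fun c _ => by
      cases c
      · exact le_max_left _ _
      · exact le_max_right _ _
  · exact max_le (Finset.le_sup' _ (Finset.mem_univ _))
      (Finset.le_sup' _ (Finset.mem_univ _))

lemma post_eq (S : Finset (Fin 2)) (x : Fin 2 → ℕ) (c : Bool) (a b : ℕ)
    (h1 : ((Dex.mset S x).filter (fun j => Dex.lab j = c)).card = a)
    (h2 : (Dex.mset S x).card = b) : post Dex S x c = a / b := by
  rw [post, h1, h2]

lemma P00 : power Dex {0} (Dex.pt i0) = 2/3 := by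
  rw [power_bool, post_eq _ _ _ 2 3 (by decide) (by decide),
    post_eq _ _ _ 1 3 (by decide) (by decide)]; norm_num
lemma P01 : power Dex {1} (Dex.pt i0) = 1 := by
  rw [power_bool, post_eq _ _ _ 1 1 (by decide) (by decide),
    post_eq _ _ _ 0 1 (by decide) (by decide)]; norm_num
lemma P11 : power Dex {1} (Dex.pt i1) = 1 := by
  rw [power_bool, post_eq _ _ _ 1 1 (by decide) (by decide),
    post_eq _ _ _ 0 1 (by decide) (by decide)]; norm_num
lemma P20 : power Dex {0} (Dex.pt i2) = 2/3 := by
  rw [power_bool, post_eq _ _ _ 2 3 (by decide) (by decide),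
    post_eq _ _ _ 1 3 (by decide) (by decide)]; norm_num
lemma P21 : power Dex {1} (Dex.pt i2) = 1/2 := by
  rw [power_bool, post_eq _ _ _ 1 2 (by decide) (by decide),
    post_eq _ _ _ 1 2 (by decide) (by decide)]; norm_num
lemma P30 : power Dex {0} (Dex.pt i3) = 1 := by
  rw [power_bool, post_eq _ _ _ 1 1 (by decide) (by decide),
    post_eq _ _ _ 0 1 (by decide) (by decide)]; norm_num
lemma P31 : power Dex {1} (Dex.pt i3) = 1/2 := by
  rw [power_bool, post_eq _ _ _ 1 2 (by decide) (by decide),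
    post_eq _ _ _ 1 2 (by decide) (by decide)]; norm_num

lemma Pfull : ∀ i : Fin Dex.n, power Dex {0, 1} (Dex.pt i) = 1 := by
  intro i
  fin_cases i
  · rw [power_bool, post_eq _ _ _ 1 1 (by decide) (by decide),
      post_eq _ _ _ 0 1 (by decide) (by decide)]; norm_num
  · rw [power_bool, post_eq _ _ _ 1 1 (by decide) (by decide),
      post_eq _ _ _ 0 1 (by decide) (by decide)]; norm_num
  · rw [power_bool, post_eq _ _ _ 0 1 (by decide) (by decide),
      post_eq _ _ _ 1 1 (by decide) (by decide)]; norm_num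
  · rw [power_bool, post_eq _ _ _ 1 1 (by decide) (by decide),
      post_eq _ _ _ 0 1 (by decide) (by decide)]; norm_num

/-- with feature-count fair privacy on the illustrative dataset,
(a) no assignment of singleton feature sets gives equal predictive power to all points;
(b) using both features for every point gives equal accuracy 1 but violates
need-to-know, since `Φ_{f₂}(x₁) = Φ_{f₂}(x₂) = 1` and `Φ_{f₁}(x₄) = 1`. -/
theorem stmt10 :
    (¬ ∃ σ : Fin Dex.n → Finset (Fin 2), (∀ i, (σ i).card = 1) ∧
        ∃ γ : ℝ, ∀ i, power Dex (σ i) (Dex.pt i) = γ) ∧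
    ((∀ i : Fin Dex.n, power Dex {0, 1} (Dex.pt i) = 1) ∧
      power Dex {1} (Dex.pt i0) = 1 ∧ power Dex {1} (Dex.pt i1) = 1 ∧
      power Dex {0} (Dex.pt i3) = 1 ∧
      ∃ (i : Fin Dex.n), ∃ S' ⊂ ({0, 1} : Finset (Fin 2)),
        power Dex {0, 1} (Dex.pt i) ≤ power Dex S' (Dex.pt i)) := by
  constructor
  · rintro ⟨σ, hcard, γ, hγ⟩
    have hS : ∀ S : Finset (Fin 2), S.card = 1 → S = {0} ∨ S = {1} := by decide
    have h0 := hγ i0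
    have h2 := hγ i2
    have h3 := hγ i3
    rcases hS _ (hcard i0) with e0 | e0 <;> rw [e0] at h0 <;>
      rcases hS _ (hcard i2) with e2 | e2 <;> rw [e2] at h2 <;>
        rcases hS _ (hcard i3) with e3 | e3 <;> rw [e3] at h3 <;>
          simp only [P00, P01, P20, P21, P30, P31] at h0 h2 h3 <;> linarith
  · refine ⟨Pfull, P01, P11, P30, i0, {1}, by decide, ?_⟩
    rw [Pfull i0, P01]
end

section
/- If a dataset D satisfies: for every non-empty S ⊆ F, either there exist x_i, x_j ∈ D with Φ_S(x_i) ≠ Φ_S(x_j), or there exist x_i ∈ D and S' ⊂ S with Φ_{S'}(x_i) ≥ Φ_S(x_i) — then any non-trivial classifier that satisfies fair privacy (feature-match), fair accuracy, and need-to-know on D is not optimal. -/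
open Finset

variable {ι V L : Type*} [DecidableEq ι] [DecidableEq V] [DecidableEq L] [Fintype L] [Nonempty L]

lemma post_nonneg (D : Dataset ι V L) (S : Finset ι) (x : ι → V) (c : L) :
    0 ≤ post D S x c := by
  unfold post; positivity

lemma post_le_power (D : Dataset ι V L) (S : Finset ι) (x : ι → V) (c : L) :
    post D S x c ≤ power D S x :=
  Finset.le_sup' _ (Finset.mem_univ c)

lemma acc_le_power (D : Dataset ι V L) (Yh : Finset ι → (ι → V) → L → ℝ)
    (hYh : IsDist Yh) (S : Finset ι) (x : ι → V) :
    acc D Yh S x ≤ power D S x := by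
  calc acc D Yh S x ≤ ∑ c, power D S x * Yh S x c := by
        apply Finset.sum_le_sum
        intro c _
        exact mul_le_mul_of_nonneg_right (post_le_power D S x c) (hYh.1 S x c)
    _ = power D S x := by rw [← Finset.mul_sum, hYh.2 S x, mul_one]

/-- A deterministic "argmax" classifier. -/
noncomputable def bestYh (D : Dataset ι V L) : Finset ι → (ι → V) → L → ℝ :=
  fun S x c => if c = Classical.choose (Finset.exists_mem_eq_sup' (f := post D S x)
      (Finset.univ_nonempty)) then 1 else 0

lemma bestYh_isDist (D : Dataset ι V L) : IsDist (bestYh D) := by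
  constructor
  · intro S x c; unfold bestYh; split <;> norm_num
  · intro S x; unfold bestYh; simp

lemma acc_bestYh (D : Dataset ι V L) (S : Finset ι) (x : ι → V) :
    acc D (bestYh D) S x = power D S x := by
  have h := Classical.choose_spec (Finset.exists_mem_eq_sup' (f := post D S x)
      (Finset.univ_nonempty))
  unfold acc bestYh
  rw [Finset.sum_eq_single (Classical.choose (Finset.exists_mem_eq_sup' (f := post D S x)
      (Finset.univ_nonempty)))]
  · rw [if_pos rfl, mul_one]; exact h.2.symm
  · intro b _ hb; rw [if_neg hb, mul_zero]
  · intro h'; exact absurd (Finset.mem_univ _) h'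

lemma optimal_acc_eq (D : Dataset ι V L) (Yh : Finset ι → (ι → V) → L → ℝ)
    (hopt : IsOptimal D Yh) (i : Fin D.n) (S : Finset ι) :
    acc D Yh S (D.pt i) = power D S (D.pt i) := by
  refine le_antisymm (acc_le_power D Yh hopt.1 S _) ?_
  have := hopt.2 (bestYh D) (bestYh_isDist D) i S
  rwa [acc_bestYh] at this

/-- if every nonempty feature set either has unequal predictive power on
two points or admits a proper subset of at least equal predictive power at some point,
then any non-trivial classifier satisfying fair privacy (feature match), fair accuracy,
and need-to-know on `D` is not optimal. -/
theorem stmt14 (D : Dataset ι V L)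
    (htr : ∀ S : Finset ι, S.Nonempty →
      (∃ i j : Fin D.n, power D S (D.pt i) ≠ power D S (D.pt j)) ∨
      (∃ (i : Fin D.n), ∃ S' ⊂ S, power D S (D.pt i) ≤ power D S' (D.pt i))) :
    ∀ (Yh : Finset ι → (ι → V) → L → ℝ) (σ : Fin D.n → Finset ι),
      NonTrivial D σ → FairPrivacyMatch D σ → FairAccuracy D Yh σ →
      NeedToKnow D Yh σ → ¬ IsOptimal D Yh := by
  intro Yh σ hnt hfp hfa hntk hopt
  obtain ⟨S, hS⟩ := hfp
  obtain ⟨γ, _, _, hγ⟩ := hfa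
  have i0 : Fin D.n := ⟨0, D.npos⟩
  have hSne : S.Nonempty := by
    rw [Finset.nonempty_iff_ne_empty]
    intro h; exact hnt i0 (by rw [hS i0, h])
  have hacc : ∀ i : Fin D.n, acc D Yh S (D.pt i) = power D S (D.pt i) := fun i =>
    optimal_acc_eq D Yh hopt i S
  rcases htr S hSne with ⟨i, j, hij⟩ | ⟨i, S', hsub, hle⟩
  · apply hij
    rw [← hacc i, ← hacc j]
    have h1 := hγ i; rw [hS i] at h1
    have h2 := hγ j; rw [hS j] at h2
    rw [h1, h2]
  · have h1 := hntk i S' (by rw [hS i]; exact hsub)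
    rw [hS i, hacc i, optimal_acc_eq D Yh hopt i S'] at h1
    exact absurd hle (not_le.mpr h1)
end
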